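/- For every non-empty word w, one has des(w) = des(w \ sw(w)) + des(sw(w)), where sw(w) is the special wave of w and w \ sw(w) is the word obtained by removing sw(w) from w. -/

import Mathlib

namespace Paper

/-- number of descents of a word -/
def des : List ℕ → ℕ
  | a :: b :: t => (if b < a then 1 else 0) + des (b :: t)
  | _ => 0

/-- number of inversions of a word -/
def inv : List ℕ → ℕ
  | [] => 0
  | a :: t => (t.countP fun x => decide (x < a)) + inv t

/-- a word is (strictly) increasing -/
def Incr (w : List ℕ) : Prop := w.Chain' (· < ·)

/-- a word is a hook: `a₁ > a₂` and `a₂ < a₃ < ⋯ < a_s`, length ≥ 2 -/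
def IsHook : List ℕ → Prop
  | a :: b :: t => b < a ∧ (b :: t).Chain' (· < ·)
  | _ => False

/-- `(γ, hs)` is the hook factorization data of `w` -/
def IsHookFact (w γ : List ℕ) (hs : List (List ℕ)) : Prop :=
  Incr γ ∧ (∀ h ∈ hs, IsHook h) ∧ w = γ ++ hs.flatten

/-- the statistic `lec` computed from the hooks of a factorization -/
def lecVal (hs : List (List ℕ)) : ℕ := (hs.map inv).sum

/-- one-line word of `σ ∈ S_n`, with entries in `[1..n]` -/
def word {n : ℕ} (σ : Equiv.Perm (Fin n)) : List ℕ :=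
  List.ofFn fun i => (σ i : ℕ) + 1

/-- a word `w₁ ⋯ w_ℓ` with maximum in position `c` is a (nontrivial) reverse wave if
`c ≠ ℓ` and `w₁ < ⋯ < w_{c-1} < w_ℓ < w_{ℓ-1} < ⋯ < w_c`. -/
def IsRevWave (w : List ℕ) : Prop :=
  ∃ c, c + 1 < w.length ∧ (w.take c ++ (w.drop c).reverse).Chain' (· < ·)

/-- a word `w₁ ⋯ w_ℓ` with maximum in position `c` is a (nontrivial) wave if
`c ≠ ℓ` and `w_ℓ < w_{ℓ-1} < ⋯ < w_{c+1} < w₁ < ⋯ < w_c`. -/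
def IsWave (w : List ℕ) : Prop :=
  ∃ c, c + 1 < w.length ∧ ((w.drop (c + 1)).reverse ++ w.take (c + 1)).Chain' (· < ·)

/-- the maximal strictly decreasing run starting below `hi` and staying above `lo` -/
def decRun (hi lo : ℕ) : List ℕ → List ℕ
  | [] => []
  | b :: t => if b < hi ∧ lo < b then b :: decRun b lo t else []

def srwAux (lo : ℕ) : List ℕ → List ℕ
  | [] => []
  | [a] => [a]
  | a :: b :: t => if a < b then a :: srwAux a (b :: t) else a :: decRun a lo (b :: t)

/-- the special reverse wave of a word: the prefix `w₁ ⋯ w_s` where `t` is the position of the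
first descent (the whole word if none) and `s ≥ t` is maximal with
`w_t > w_{t+1} > ⋯ > w_s > w_{t-1}` (convention `w₀ = 0`). -/
def srw (w : List ℕ) : List ℕ := srwAux 0 w

/-- the number of special reverse descents: `des (srw w) + χ(w_s > w_{s+1})` -/
def srdes (w : List ℕ) : ℕ :=
  des (srw w) +
    match (srw w).getLast?, (w.drop (srw w).length).head? with
    | some x, some y => if y < x then 1 else 0
    | _, _ => 0

/-- the prefix `w₁ ⋯ w_t` of `w` ending at the position `t` of the first descent
(the whole word if there is no descent) -/
def incrPrefix : List ℕ → List ℕ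
  | [] => []
  | [a] => [a]
  | a :: b :: t => if a < b then a :: incrPrefix (b :: t) else [a]

/-- the special wave `w_r ⋯ w_t ⋯ w_s` of a word -/
def sw (w : List ℕ) : List ℕ :=
  let pre := incrPrefix w
  match w.drop pre.length with
  | [] => w
  | x :: rs =>
    let kept := pre.takeWhile fun u => decide (u < x)
    pre.drop kept.length ++ x :: decRun x (kept.getLastD 0) rs

/-- the word `w \ sw(w) = w₁ ⋯ w_{r-1} w_{s+1} ⋯ w_ℓ` obtained removing the special wave -/
def swCompl (w : List ℕ) : List ℕ :=
  let pre := incrPrefix w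
  match w.drop pre.length with
  | [] => []
  | x :: rs =>
    let kept := pre.takeWhile fun u => decide (u < x)
    kept ++ rs.drop (decRun x (kept.getLastD 0) rs).length

/-- insertion `ins(a,b) = a₁ ⋯ a_x b₁ ⋯ b_q a_{x+1} ⋯ a_p`, where `x` is maximal with
`a₁ < a₂ < ⋯ < a_x < b_q` -/
def ins (a b : List ℕ) : List ℕ :=
  let pfx := (incrPrefix a).takeWhile fun u => decide (u < b.getLastD 0)
  pfx ++ b ++ a.drop pfx.length

/-- the word `ρ = ρ₁ ⋯ ρ_m` (entries in `[1..n]`) associated to an injection `Fin m ↪ Fin n` -/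
def rho {n m : ℕ} (f : Fin m ↪ Fin n) : List ℕ :=
  List.ofFn fun j => (f j : ℕ) + 1

/-- descent number of the pair `(α₀, ρ)`: `des ρ + #{a ∈ α₀ : a > ρ₁}`,
where `α₀ = [n] \ {ρ₁, …, ρ_m}` -/
def desPair (n : ℕ) {m : ℕ} (f : Fin m ↪ Fin n) : ℕ :=
  des (rho f) + ((Finset.Icc 1 n).filter fun a => a ∉ rho f ∧ (rho f).headI < a).card

/-- descent number of the pair `(α₀, ρ)`, with `ρ` given as a list -/
def desPairL (n : ℕ) (ρ : List ℕ) : ℕ :=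
  des ρ + ((Finset.Icc 1 n).filter fun a => a ∉ ρ ∧ ρ.headI < a).card

/-- the map `μ`, sending `ρ` (with complementary set `α₀ = {α₁ < ⋯ < α_{n-k-1}}`) to
`α₁ ⋯ α_{n-k-m-1} α_{n-k-1} α_{n-k-2} ⋯ α_{n-k-m} ρ₁ ⋯ ρ_{k+1}`,
where `m = #{a ∈ α₀ : a > ρ₁}` -/
def mu (n : ℕ) (ρ : List ℕ) : List ℕ :=
  let A := ((Finset.Icc 1 n).filter fun a => a ∉ ρ).sort (· ≤ ·)
  let m := (A.filter fun a => decide (ρ.headI < a)).length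
  (A.take (A.length - m) ++ (A.drop (A.length - m)).reverse) ++ ρ

end Paper

/-!
Cut `w = κ δ x ρ τ`, where `κ δ = w₁ ⋯ w_t` is the increasing prefix, `κ` its letters below
`x = w_{t+1}`, and `x ρ` the decreasing run of the special wave, so that `sw w = δ x ρ` and
`w \ sw w = κ τ`. The descents of a concatenation are those of the pieces plus the one possibly
created at each junction. The junction `κ | δ` is an ascent and `δ | x` is shared by both sides,
so it remains to see that `x ρ | τ` is a descent iff `κ | τ` is. The run `x ρ` stops at the first
letter `y` of `τ` precisely because `y` is not strictly between the last letter `ℓ` of `κ`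
(or `0`) and the last letter of `x ρ`; as `y ≠ ℓ` by distinctness and positivity, `y` lies below
the last letter of `x ρ` iff it lies below `ℓ`.
-/

namespace Paper

/-- The descent possibly created when `v` is appended to `u`; an empty `u` counts as ending in
`0`, matching the convention `w₀ = 0`. -/
def junctionDes (u v : List ℕ) : ℕ :=
  match v with
  | [] => 0
  | y :: _ => if y < u.getLastD 0 then 1 else 0

theorem junctionDes_cons_cons (a b : ℕ) (u v : List ℕ) :
    junctionDes (a :: b :: u) v = junctionDes (b :: u) v := by
  cases v <;> simp [junctionDes]

theorem junctionDes_singleton_getLastD (u v : List ℕ) :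
    junctionDes [u.getLastD 0] v = junctionDes u v := by
  cases v <;> rfl

theorem junctionDes_append_of_ne_nil (u : List ℕ) {v : List ℕ} (hv : v ≠ []) (z : List ℕ) :
    junctionDes u (v ++ z) = junctionDes u v := by
  obtain ⟨y, v, rfl⟩ := List.exists_cons_of_ne_nil hv
  rfl

theorem junctionDes_eq_zero_of_isChain {u v : List ℕ} (h : (u ++ v).IsChain (· < ·)) :
    junctionDes u v = 0 := by
  rcases v with _ | ⟨y, v⟩
  · rfl
  have hlast := (List.isChain_append.1 h).2.2
  cases hu : u.getLast? with
  | none => simp [junctionDes, hu]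
  | some a => simp [junctionDes, hu, le_of_lt (hlast a hu y rfl)]

theorem des_append : ∀ u v : List ℕ, des (u ++ v) = des u + junctionDes u v + des v
  | [], v => by cases v <;> simp [des, junctionDes]
  | [_], [] => rfl
  | [_], _ :: _ => by simp [des, junctionDes]
  | a :: b :: u, v => by
    simp only [List.cons_append, des, junctionDes_cons_cons]
    rw [← List.cons_append, des_append (b :: u) v]
    omega

theorem decRun_prefix (hi lo : ℕ) : ∀ rs : List ℕ, decRun hi lo rs <+: rs
  | [] => List.nil_prefix
  | b :: t => by
    unfold decRun
    split
    · exact List.cons_prefix_cons.2 ⟨rfl, decRun_prefix b lo t⟩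
    · exact List.nil_prefix

theorem incrPrefix_prefix : ∀ w : List ℕ, incrPrefix w <+: w
  | [] => List.nil_prefix
  | [_] => List.prefix_refl _
  | a :: b :: t => by
    unfold incrPrefix
    split
    · exact List.cons_prefix_cons.2 ⟨rfl, incrPrefix_prefix (b :: t)⟩
    · exact List.cons_prefix_cons.2 ⟨rfl, List.nil_prefix⟩

theorem head?_incrPrefix : ∀ w : List ℕ, (incrPrefix w).head? = w.head?
  | [] | [_] => rfl
  | _ :: _ :: _ => by unfold incrPrefix; split <;> rfl

theorem isChain_incrPrefix : ∀ w : List ℕ, (incrPrefix w).IsChain (· < ·)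
  | [] => List.isChain_nil
  | [a] => List.isChain_singleton a
  | a :: b :: t => by
    unfold incrPrefix
    split
    · next hab =>
      refine List.isChain_cons.2 ⟨?_, isChain_incrPrefix (b :: t)⟩
      simpa [head?_incrPrefix] using hab
    · exact List.isChain_singleton a

theorem exists_mem_incrPrefix_le : ∀ {w rs : List ℕ} {x : ℕ},
    w.drop (incrPrefix w).length = x :: rs → ∃ g ∈ incrPrefix w, x ≤ g
  | [], _, _, h | [_], _, _, h => by simp [incrPrefix] at h
  | a :: b :: t, rs, x, h => by
    unfold incrPrefix at h ⊢
    by_cases hab : a < b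
    · rw [if_pos hab] at h ⊢
      obtain ⟨g, hg, hxg⟩ := exists_mem_incrPrefix_le (w := b :: t) (by simpa using h)
      exact ⟨g, List.mem_cons_of_mem a hg, hxg⟩
    · rw [if_neg hab] at h ⊢
      simp only [List.length_singleton, List.drop_one, List.tail_cons, List.cons.injEq] at h
      exact ⟨a, List.mem_singleton_self a, by omega⟩

theorem junctionDes_takeWhile_drop {l : List ℕ} (hl : l.IsChain (· < ·)) {p : ℕ → Bool}
    (hp : ∃ a ∈ l, ¬ p a) (z : List ℕ) :
    junctionDes (l.takeWhile p) (l.drop (l.takeWhile p).length ++ z) = 0 := by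
  have hsplit := List.prefix_iff_eq_append.1 (List.takeWhile_prefix p (l := l))
  have hdrop : l.drop (l.takeWhile p).length ≠ [] := by
    intro h
    obtain ⟨a, ha, hpa⟩ := hp
    rw [h, List.append_nil] at hsplit
    exact hpa (List.takeWhile_eq_self_iff.1 hsplit a ha)
  rw [junctionDes_append_of_ne_nil _ hdrop]
  exact junctionDes_eq_zero_of_isChain (hsplit.symm ▸ hl)

theorem getLastD_takeWhile_lt (l : List ℕ) {x : ℕ} (hx : 0 < x) :
    (l.takeWhile fun u => decide (u < x)).getLastD 0 < x := by
  rcases List.mem_cons.1 (List.getLastD_mem_cons (l := l.takeWhile _) (a := 0)) with h | h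
  · rwa [h]
  · simpa using List.mem_takeWhile_imp h

theorem getLastD_takeWhile_not_mem {l rs : List ℕ} (hd : l.Disjoint rs) (h0 : 0 ∉ rs)
    (p : ℕ → Bool) : (l.takeWhile p).getLastD 0 ∉ rs := by
  rcases List.mem_cons.1 (List.getLastD_mem_cons (l := l.takeWhile p) (a := 0)) with h | h
  · rwa [h]
  · exact fun hrs => hd ((List.takeWhile_sublist p).subset h) hrs

theorem junctionDes_decRun {lo : ℕ} : ∀ {hi : ℕ} {rs : List ℕ}, lo < hi → lo ∉ rs →
    junctionDes (hi :: decRun hi lo rs) (rs.drop (decRun hi lo rs).length)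
      = junctionDes [lo] (rs.drop (decRun hi lo rs).length)
  | _, [], _, _ => rfl
  | hi, b :: t, hlo, hrs => by
    rw [List.mem_cons, not_or] at hrs
    unfold decRun
    split
    · next hb =>
      have ih := junctionDes_decRun (hi := b) (rs := t) hb.2 hrs.2
      simpa [junctionDes, List.getLastD_cons] using ih
    · next hb =>
      have : b ≠ lo := fun h => hrs.1 h.symm
      simp only [List.length_nil, List.drop_zero, junctionDes, List.getLastD_cons, List.getLastD_nil]
      split_ifs <;> omega

end Paper

theorem Paper.statement14_general (w : List ℕ) (hnd : w.Nodup)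
    (hpos : ∀ x ∈ w, 0 < x) :
    des w = des (swCompl w) + des (sw w) := by
  rcases hdrop : w.drop (incrPrefix w).length with _ | ⟨x, rs⟩
  · simp [sw, swCompl, hdrop, des]
  set pre := incrPrefix w with hpre_def
  set kept := pre.takeWhile fun u => decide (u < x)
  set dropped := pre.drop kept.length
  set lo := kept.getLastD 0
  set run := decRun x lo rs
  set rest := rs.drop run.length
  have hsw : sw w = dropped ++ x :: run := by simp only [sw, ← hpre_def, hdrop]; rfl
  have hsc : swCompl w = kept ++ rest := by simp only [swCompl, ← hpre_def, hdrop]; rfl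
  have hw : w = pre ++ x :: rs := by rw [← hdrop, List.prefix_iff_eq_append.1 (incrPrefix_prefix w)]
  have hpre : pre = kept ++ dropped := (List.prefix_iff_eq_append.1 (List.takeWhile_prefix _)).symm
  have hrs : rs = run ++ rest := (List.prefix_iff_eq_append.1 (decRun_prefix x lo rs)).symm
  have hlo : lo < x := getLastD_takeWhile_lt pre (hpos x (by simp [hw]))
  have hlo_rs : lo ∉ rs := by
    have hd := (List.nodup_append.1 (hw ▸ hnd)).2.2
    refine getLastD_takeWhile_not_mem (fun a ha hrs => hd a ha a (List.mem_cons_of_mem x hrs) rfl)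
      (fun h0 => (hpos 0 (by simp [hw, h0])).false) _
  have hascent : junctionDes kept (dropped ++ (x :: run ++ rest)) = 0 := by
    obtain ⟨g, hg, hxg⟩ := exists_mem_incrPrefix_le hdrop
    exact junctionDes_takeWhile_drop (isChain_incrPrefix w) ⟨g, hg, by simpa using hxg⟩ _
  have hkey : junctionDes (x :: run) rest = junctionDes kept rest :=
    (junctionDes_decRun hlo hlo_rs).trans (junctionDes_singleton_getLastD kept rest)
  rw [hsw, hsc, hw, hpre, hrs, ← List.cons_append, List.append_assoc, des_append kept,
    des_append dropped, des_append (x :: run), des_append kept, des_append dropped,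
    junctionDes_append_of_ne_nil dropped (List.cons_ne_nil x run), hascent, hkey]
  omega

/-- for every non-empty word `w`,
`des w = des (w \ sw w) + des (sw w)`. -/
theorem Paper.statement14 (w : List ℕ) (hw : w ≠ []) (hnd : w.Nodup)
    (hpos : ∀ x ∈ w, 0 < x) :
    des w = des (swCompl w) + des (sw w) :=
  Paper.statement14_general w hnd hpos
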